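/- Lipschitz dependence of the smoothed function on the smoothing parameter (Technical Lemma D). Let F : ℝ^d → ℝ be L_F-Lipschitz. Then for every x ∈ ℝ^d and all μ₁, μ₂ > 0, |F_{μ₁}(x) − F_{μ₂}(x)| ≤ L_F·√d·|μ₁ − μ₂|, where F_μ(x) := ∫ F(x + μ·u) dγ(u). -/

import Mathlib

open MeasureTheory ProbabilityTheory

/-- The standard Gaussian measure on `EuclideanSpace ℝ (Fin d)`, i.e. the `d`-fold
product of the standard Gaussian measure `N(0,1)` on `ℝ`. -/
noncomputable def stdGaussian (d : ℕ) : Measure (EuclideanSpace ℝ (Fin d)) :=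
  (Measure.pi fun _ : Fin d => gaussianReal 0 1).map
    (MeasurableEquiv.toLp 2 (Fin d → ℝ))

/-!
Pointwise, the Lipschitz bound gives `|F (x + μ₁ • u) - F (x + μ₂ • u)| ≤ L_F * |μ₁ - μ₂| * ‖u‖`,
so the two smoothed values differ by at most `L_F * |μ₁ - μ₂| * 𝔼‖u‖` under the standard Gaussian.
Nonnegativity of the variance of `‖u‖` gives `𝔼‖u‖ ≤ √(𝔼‖u‖²)`, and `𝔼‖u‖² = d` because the
coordinates `⟪bᵢ, u⟫` of `u` in an orthonormal basis are centered with variance `‖bᵢ‖² = 1`.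
-/

open scoped RealInnerProductSpace

section Lipschitz

variable {E G : Type*} [NormedAddCommGroup E] [NormedSpace ℝ E] [NormedAddCommGroup G]
  {K : NNReal} {F : E → G}

lemma LipschitzWith.norm_comp_add_smul_sub_le (hF : LipschitzWith K F) (x u : E) (a b : ℝ) :
    ‖F (x + a • u) - F (x + b • u)‖ ≤ K * |a - b| * ‖u‖ := by
  calc ‖F (x + a • u) - F (x + b • u)‖
      ≤ K * dist (x + a • u) (x + b • u) := by rw [← dist_eq_norm]; exact hF.dist_le_mul _ _
    _ = K * |a - b| * ‖u‖ := by
      rw [dist_add_left, dist_eq_norm, ← sub_smul, norm_smul, Real.norm_eq_abs, mul_assoc]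

variable [MeasurableSpace E] [OpensMeasurableSpace E] [SecondCountableTopologyEither E G]
  {μ : Measure E}

lemma LipschitzWith.integrable_comp_add_smul [IsFiniteMeasure μ] (hF : LipschitzWith K F)
    (hμ : Integrable (‖·‖) μ) (x : E) (a : ℝ) : Integrable (fun u ↦ F (x + a • u)) μ := by
  refine ((integrable_const ‖F x‖).add (hμ.const_mul (K * |a|))).mono'
    (hF.continuous.comp (by fun_prop)).aestronglyMeasurable (.of_forall fun u ↦ ?_)
  calc ‖F (x + a • u)‖ ≤ ‖F x‖ + ‖F (x + a • u) - F x‖ := norm_le_norm_add_norm_sub' _ _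
    _ ≤ ‖F x‖ + K * |a| * ‖u‖ := by
      grw [← dist_eq_norm, hF.dist_le_mul, dist_self_add_left, norm_smul, Real.norm_eq_abs,
        mul_assoc]

lemma LipschitzWith.norm_integral_comp_add_smul_sub_le [NormedSpace ℝ G] [IsFiniteMeasure μ]
    (hF : LipschitzWith K F) (hμ : Integrable (‖·‖) μ) (x : E) (a b : ℝ) :
    ‖∫ u, F (x + a • u) ∂μ - ∫ u, F (x + b • u) ∂μ‖ ≤ K * |a - b| * ∫ u, ‖u‖ ∂μ := by
  rw [← integral_sub (hF.integrable_comp_add_smul hμ x a) (hF.integrable_comp_add_smul hμ x b),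
    ← integral_const_mul]
  exact norm_integral_le_of_norm_le (hμ.const_mul _)
    (.of_forall fun u ↦ hF.norm_comp_add_smul_sub_le x u a b)

end Lipschitz

lemma sq_integral_le_integral_sq {Ω : Type*} {mΩ : MeasurableSpace Ω} {μ : Measure Ω}
    [IsProbabilityMeasure μ] {X : Ω → ℝ} (hX : MemLp X 2 μ) :
    (∫ ω, X ω ∂μ) ^ 2 ≤ ∫ ω, X ω ^ 2 ∂μ := by
  have := variance_nonneg X μ
  rw [variance_eq_sub hX] at this
  simp only [Pi.pow_apply] at this
  linarith

section StdGaussian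

variable {E : Type*} [NormedAddCommGroup E] [InnerProductSpace ℝ E] [FiniteDimensional ℝ E]
  [MeasurableSpace E] [BorelSpace E]

lemma memLp_two_inner_stdGaussian (v : E) :
    MemLp (fun x ↦ ⟪v, x⟫) 2 (ProbabilityTheory.stdGaussian E) :=
  IsGaussian.memLp_two_id.const_inner v

lemma integral_inner_sq_stdGaussian (v : E) :
    ∫ x, ⟪v, x⟫ ^ 2 ∂(ProbabilityTheory.stdGaussian E) = ‖v‖ ^ 2 := by
  have hmean : ∫ x, ⟪v, x⟫ ∂(ProbabilityTheory.stdGaussian E) = 0 :=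
    integral_strongDual_stdGaussian (innerSL ℝ v)
  calc ∫ x, ⟪v, x⟫ ^ 2 ∂(ProbabilityTheory.stdGaussian E)
      = Var[fun x ↦ ⟪v, x⟫; ProbabilityTheory.stdGaussian E] := by
        rw [variance_eq_sub (memLp_two_inner_stdGaussian v), hmean]; simp
    _ = covarianceBilin (ProbabilityTheory.stdGaussian E) v v :=
        (covarianceBilin_self IsGaussian.memLp_two_id v).symm
    _ = ‖v‖ ^ 2 := by
        rw [covarianceBilin_stdGaussian, innerSL_apply_apply ℝ, real_inner_self_eq_norm_sq]

lemma integral_norm_sq_stdGaussian :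
    ∫ x, ‖x‖ ^ 2 ∂(ProbabilityTheory.stdGaussian E) = Module.finrank ℝ E := by
  let b := stdOrthonormalBasis ℝ E
  simp_rw [← b.sum_sq_inner_right]
  rw [integral_finsetSum _ fun i _ ↦ (memLp_two_inner_stdGaussian (b i)).integrable_sq]
  simp [integral_inner_sq_stdGaussian, b.orthonormal.1]

lemma integral_norm_stdGaussian_le :
    ∫ x, ‖x‖ ∂(ProbabilityTheory.stdGaussian E) ≤ √(Module.finrank ℝ E) := by
  rw [← integral_norm_sq_stdGaussian]
  exact Real.le_sqrt_of_sq_le (sq_integral_le_integral_sq IsGaussian.memLp_two_id.norm)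

end StdGaussian

lemma stdGaussian_eq_stdGaussian_euclideanSpace (d : ℕ) :
    stdGaussian d = ProbabilityTheory.stdGaussian (EuclideanSpace ℝ (Fin d)) :=
  map_pi_eq_stdGaussian

theorem smoothed_function_lipschitz_in_mu_general
    (d : ℕ)
    (F : EuclideanSpace ℝ (Fin d) → ℝ)
    (L_F : ℝ) (hL_F : 0 ≤ L_F) (hFLip : LipschitzWith L_F.toNNReal F)
    (x : EuclideanSpace ℝ (Fin d)) (μ₁ μ₂ : ℝ) :
    |(∫ u, F (x + μ₁ • u) ∂(stdGaussian d)) - ∫ u, F (x + μ₂ • u) ∂(stdGaussian d)|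
      ≤ L_F * Real.sqrt d * |μ₁ - μ₂| := by
  rw [stdGaussian_eq_stdGaussian_euclideanSpace]
  have hbound := hFLip.norm_integral_comp_add_smul_sub_le
    (IsGaussian.integrable_id (μ := ProbabilityTheory.stdGaussian _)).norm x μ₁ μ₂
  rw [Real.norm_eq_abs, Real.coe_toNNReal _ hL_F] at hbound
  calc _ ≤ L_F * |μ₁ - μ₂| * ∫ u, ‖u‖ ∂(ProbabilityTheory.stdGaussian _) := hbound
    _ ≤ L_F * |μ₁ - μ₂| * √(Module.finrank ℝ (EuclideanSpace ℝ (Fin d))) := by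
      gcongr; exact integral_norm_stdGaussian_le
    _ = L_F * √d * |μ₁ - μ₂| := by rw [finrank_euclideanSpace_fin]; ring

/-- Lipschitz dependence of the Gaussian smoothed function on the smoothing
parameter (Technical Lemma D). -/
theorem smoothed_function_lipschitz_in_mu
    (d : ℕ) (hd : 0 < d)
    (F : EuclideanSpace ℝ (Fin d) → ℝ)
    (L_F : ℝ) (hL_F : 0 ≤ L_F) (hFLip : LipschitzWith L_F.toNNReal F)
    (x : EuclideanSpace ℝ (Fin d)) (μ₁ μ₂ : ℝ) (hμ₁ : 0 < μ₁) (hμ₂ : 0 < μ₂) :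
    |(∫ u, F (x + μ₁ • u) ∂(stdGaussian d)) - ∫ u, F (x + μ₂ • u) ∂(stdGaussian d)|
      ≤ L_F * Real.sqrt d * |μ₁ - μ₂| :=
  smoothed_function_lipschitz_in_mu_general d F L_F hL_F hFLip x μ₁ μ₂
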